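/- arXiv:1206.1151 — 4 statements merged into one kernel-verified Lean document; each statement's English description precedes it below -/
import Mathlib

section
/- If the radial Gibbons–Tsarev equations hold, then the rotation coefficients β_{mn} = √(α_m α_n γ_m γ_n)/(γ_m − γ_n)² satisfy the Darboux equations ∂β_{mn}/∂λ_k = β_{mk} β_{kn} for all pairwise distinct indices k, m, n. -/
/-- Partial derivative of a function on `Fin K → ℝ` in the `m`-th coordinate direction. -/
noncomputable def pd {K : ℕ} (f : (Fin K → ℝ) → ℝ) (m : Fin K) (Λ : Fin K → ℝ) : ℝ :=
  fderiv ℝ f Λ (Pi.single m 1)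

/-- The rotation coefficients β_{mn} = √(α_m α_n γ_m γ_n)/(γ_m − γ_n)². -/
noncomputable def rotCoeff {K : ℕ} (γ α : Fin K → (Fin K → ℝ) → ℝ)
    (m n : Fin K) (Λ : Fin K → ℝ) : ℝ :=
  Real.sqrt (α m Λ * α n Λ * γ m Λ * γ n Λ) / (γ m Λ - γ n Λ) ^ 2

set_option maxHeartbeats 2000000 in
/-- Under the radial Gibbons–Tsarev equations, the rotation coefficients
β_{mn} = √(α_m α_n γ_m γ_n)/(γ_m − γ_n)² satisfy the Darboux equations
∂β_{mn}/∂λ_k = β_{mk} β_{kn} for pairwise distinct k, m, n. -/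
theorem radial_GT_Darboux {K : ℕ} (γ α : Fin K → (Fin K → ℝ) → ℝ)
    (hγs : ∀ n, ContDiff ℝ (⊤ : ℕ∞) (γ n)) (hαs : ∀ n, ContDiff ℝ (⊤ : ℕ∞) (α n))
    (hsep : ∀ m n, m ≠ n → ∀ Λ, γ m Λ ≠ γ n Λ)
    (hprod : ∀ n Λ, 0 < α n Λ * γ n Λ)
    (hGT1 : ∀ m n, m ≠ n → ∀ Λ,
      pd (γ n) m Λ = α m Λ * γ n Λ / (γ m Λ - γ n Λ))
    (hGT2 : ∀ m n, m ≠ n → ∀ Λ,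
      pd (α n) m Λ = α m Λ * α n Λ * (γ m Λ + γ n Λ) / (γ m Λ - γ n Λ) ^ 2) :
    ∀ k m n, k ≠ m → k ≠ n → m ≠ n → ∀ Λ,
      pd (rotCoeff γ α m n) k Λ
        = rotCoeff γ α m k Λ * rotCoeff γ α k n Λ := by
  intro k m n hkm hkn hmn Λ
  have dA : ∀ j, HasFDerivAt (α j) (fderiv ℝ (α j) Λ) Λ :=
    fun j => (((hαs j).differentiable (by simp)) Λ).hasFDerivAt
  have dG : ∀ j, HasFDerivAt (γ j) (fderiv ℝ (γ j) Λ) Λ :=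
    fun j => (((hγs j).differentiable (by simp)) Λ).hasFDerivAt
  have hac : 0 < α m Λ * γ m Λ := hprod m Λ
  have hbd : 0 < α n Λ * γ n Λ := hprod n Λ
  have hake : 0 < α k Λ * γ k Λ := hprod k Λ
  have hP0 : 0 < α m Λ * α n Λ * γ m Λ * γ n Λ := by nlinarith
  have hcd : γ m Λ - γ n Λ ≠ 0 := sub_ne_zero.mpr (hsep m n hmn Λ)
  have hce : γ m Λ - γ k Λ ≠ 0 := sub_ne_zero.mpr (hsep m k (Ne.symm hkm) Λ)
  have hed : γ k Λ - γ n Λ ≠ 0 := sub_ne_zero.mpr (hsep k n hkn Λ)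
  have hec : γ k Λ - γ m Λ ≠ 0 := sub_ne_zero.mpr (hsep k m hkm Λ)
  have hP : HasFDerivAt (fun y => α m y * α n y * γ m y * γ n y) _ Λ :=
    (((dA m).mul (dA n)).mul (dG m)).mul (dG n)
  have hPne : α m Λ * α n Λ * γ m Λ * γ n Λ ≠ 0 := ne_of_gt hP0
  have hS := hP.sqrt hPne
  have hQ : HasFDerivAt (fun y => (γ m y - γ n y) * (γ m y - γ n y)) _ Λ :=
    ((dG m).sub (dG n)).mul ((dG m).sub (dG n))
  have hQne : (γ m Λ - γ n Λ) * (γ m Λ - γ n Λ) ≠ 0 := mul_ne_zero hcd hcd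
  have hinv := (hasDerivAt_inv hQne).comp_hasFDerivAt Λ hQ
  have htot := hS.mul hinv
  have hfun : rotCoeff γ α m n = (fun y =>
      Real.sqrt (α m y * α n y * γ m y * γ n y)) *
        ((fun t : ℝ => t⁻¹) ∘ fun y => (γ m y - γ n y) * (γ m y - γ n y)) := by
    funext y
    simp only [Pi.mul_apply, rotCoeff, Function.comp, div_eq_mul_inv, ← pow_two]
  have htot' : HasFDerivAt (rotCoeff γ α m n) _ Λ := hfun ▸ htot
  have hL : pd (rotCoeff γ α m n) k Λ = _ := congrFun (congrArg _ htot'.fderiv) (Pi.single k 1)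
  rw [pd] at hL
  simp only [ContinuousLinearMap.add_apply, ContinuousLinearMap.smul_apply, smul_eq_mul,
    ContinuousLinearMap.sub_apply] at hL
  have hda : (fderiv ℝ (α m) Λ) (Pi.single k 1)
      = α k Λ * α m Λ * (γ k Λ + γ m Λ) / (γ k Λ - γ m Λ) ^ 2 := hGT2 k m hkm Λ
  have hdb : (fderiv ℝ (α n) Λ) (Pi.single k 1)
      = α k Λ * α n Λ * (γ k Λ + γ n Λ) / (γ k Λ - γ n Λ) ^ 2 := hGT2 k n hkn Λ
  have hdc : (fderiv ℝ (γ m) Λ) (Pi.single k 1)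
      = α k Λ * γ m Λ / (γ k Λ - γ m Λ) := hGT1 k m hkm Λ
  have hdd : (fderiv ℝ (γ n) Λ) (Pi.single k 1)
      = α k Λ * γ n Λ / (γ k Λ - γ n Λ) := hGT1 k n hkn Λ
  rw [hda, hdb, hdc, hdd] at hL
  simp only [Function.comp, Pi.sub_apply, Pi.mul_apply] at hL
  rw [pd, hL, rotCoeff, rotCoeff, div_mul_div_comm]
  have hX0 : (0:ℝ) ≤ α m Λ * α k Λ * γ m Λ * γ k Λ := by nlinarith
  have hsq : Real.sqrt (α m Λ * α k Λ * γ m Λ * γ k Λ)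
        * Real.sqrt (α k Λ * α n Λ * γ k Λ * γ n Λ)
      = α k Λ * γ k Λ * Real.sqrt (α m Λ * α n Λ * γ m Λ * γ n Λ) := by
    rw [← Real.sqrt_mul hX0,
      show α m Λ * α k Λ * γ m Λ * γ k Λ * (α k Λ * α n Λ * γ k Λ * γ n Λ)
        = (α m Λ * α n Λ * γ m Λ * γ n Λ) * (α k Λ * γ k Λ) ^ 2 from by ring,
      Real.sqrt_mul hP0.le, Real.sqrt_sq hake.le]
    ring
  rw [hsq]
  have hss : Real.sqrt (α m Λ * α n Λ * γ m Λ * γ n Λ)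
        * Real.sqrt (α m Λ * α n Λ * γ m Λ * γ n Λ)
      = α m Λ * α n Λ * γ m Λ * γ n Λ := Real.mul_self_sqrt hP0.le
  have hs0 : Real.sqrt (α m Λ * α n Λ * γ m Λ * γ n Λ) ≠ 0 :=
    ne_of_gt (Real.sqrt_pos.mpr hP0)
  have h1s : 1 / (2 * Real.sqrt (α m Λ * α n Λ * γ m Λ * γ n Λ))
      = Real.sqrt (α m Λ * α n Λ * γ m Λ * γ n Λ)
        / (2 * (α m Λ * α n Λ * γ m Λ * γ n Λ)) := by
    rw [div_eq_div_iff (mul_ne_zero two_ne_zero hs0)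
      (ne_of_gt (by linarith : (0:ℝ) < 2 * (α m Λ * α n Λ * γ m Λ * γ n Λ)))]
    linear_combination (-2 : ℝ) * hss
  rw [h1s]
  have ham : α m Λ ≠ 0 := fun h => by simp [h] at hac
  have han : α n Λ ≠ 0 := fun h => by simp [h] at hbd
  have hgm : γ m Λ ≠ 0 := fun h => by simp [h] at hac
  have hgn : γ n Λ ≠ 0 := fun h => by simp [h] at hbd
  field_simp
  ring
end

section
/- Let λ(p; λ_1,…,λ_K) satisfy the radial Löwner equations ∂λ/∂λ_n = (α_n p/(p − γ_n)) ∂λ/∂p, where γ_n are critical points of λ with λ(γ_n) = λ_n. Then the coefficients are uniquely determined as α_n = 1/(γ_n λ''(γ_n)), where λ'' denotes the second p-derivative. -/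
/-- If λ(p; λ_1,…,λ_K) satisfies the radial Löwner equations
∂λ/∂λ_n = (α_n p/(p − γ_n)) ∂λ/∂p in a punctured neighborhood of the nondegenerate
critical point γ_n (with critical value λ(γ_n) = λ_n), then the coefficients are
uniquely determined as α_n = 1/(γ_n λ''(γ_n)). -/
theorem Lowner_coefficient {K : ℕ}
    (L : ℝ × (Fin K → ℝ) → ℝ) (γ α : Fin K → (Fin K → ℝ) → ℝ)
    (U : Set (Fin K → ℝ)) (hU : IsOpen U)
    (hL : ContDiff ℝ (⊤ : ℕ∞) L) (hγ : ∀ n, ContDiff ℝ (⊤ : ℕ∞) (γ n))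
    (hcrit : ∀ n, ∀ Λ ∈ U, deriv (fun p => L (p, Λ)) (γ n Λ) = 0)
    (hnd : ∀ n, ∀ Λ ∈ U, deriv (deriv (fun p => L (p, Λ))) (γ n Λ) ≠ 0)
    (hγ0 : ∀ n, ∀ Λ ∈ U, γ n Λ ≠ 0)
    (hval : ∀ n, ∀ Λ ∈ U, L (γ n Λ, Λ) = Λ n)
    (hLowner : ∀ n, ∀ Λ ∈ U,
      ∀ᶠ p in nhdsWithin (γ n Λ) {γ n Λ}ᶜ,
        fderiv ℝ (fun Λ' => L (p, Λ')) Λ (Pi.single n 1)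
          = α n Λ * p / (p - γ n Λ) * deriv (fun q => L (q, Λ)) p) :
    ∀ n, ∀ Λ ∈ U,
      α n Λ = 1 / (γ n Λ * deriv (deriv (fun p => L (p, Λ))) (γ n Λ)) := by
  intro n Λ hΛ
  set c : ℝ := γ n Λ with hc
  set f : ℝ → ℝ := fun p => L (p, Λ) with hf
  set S : ℝ := deriv (deriv f) c with hS
  have hLd : Differentiable ℝ L := hL.differentiable (by simp)
  -- f is smooth
  have hfC : ContDiff ℝ (⊤ : ℕ∞) f := hL.comp (contDiff_id.prodMk contDiff_const)
  -- derivative of f at any point as fderiv of L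
  have hfd : ∀ p : ℝ, HasDerivAt f (fderiv ℝ L (p, Λ) (1, 0)) p := by
    intro p
    have h1 : HasDerivAt (fun q : ℝ => (q, Λ)) ((1 : ℝ), (0 : Fin K → ℝ)) p :=
      (hasDerivAt_id p).prodMk (hasDerivAt_const p Λ)
    exact (hLd (p, Λ)).hasFDerivAt.comp_hasDerivAt p h1
  -- the fderiv in the Λ'-direction
  have hFd : ∀ p : ℝ,
      fderiv ℝ (fun Λ' => L (p, Λ')) Λ = (fderiv ℝ L (p, Λ)).comp
        (ContinuousLinearMap.inr ℝ ℝ (Fin K → ℝ)) := by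
    intro p
    exact ((hLd (p, Λ)).hasFDerivAt.comp Λ (hasFDerivAt_prodMk_right p Λ)).fderiv
  set F : ℝ → ℝ := fun p => fderiv ℝ L (p, Λ) (0, Pi.single n 1) with hF
  -- F is continuous
  have hFc : Continuous F := by
    have h1 : Continuous (fun p : ℝ => fderiv ℝ L (p, Λ)) :=
      (hL.continuous_fderiv (by simp)).comp (continuous_id.prodMk continuous_const)
    exact h1.clm_apply continuous_const
  -- F c = 1, by differentiating Λ' ↦ L (γ n Λ', Λ') = Λ' n
  have hFc1 : F c = 1 := by
    have hγd : HasFDerivAt (γ n) (fderiv ℝ (γ n) Λ) Λ :=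
      ((hγ n).differentiable (by simp) Λ).hasFDerivAt
    have hG : HasFDerivAt (fun Λ' => (γ n Λ', Λ'))
        ((fderiv ℝ (γ n) Λ).prod (ContinuousLinearMap.id ℝ (Fin K → ℝ))) Λ :=
      hγd.prodMk (hasFDerivAt_id Λ)
    have hg : HasFDerivAt (L ∘ fun Λ' => (γ n Λ', Λ'))
        ((fderiv ℝ L (γ n Λ, Λ)).comp
          ((fderiv ℝ (γ n) Λ).prod (ContinuousLinearMap.id ℝ (Fin K → ℝ)))) Λ :=
      HasFDerivAt.comp Λ (hLd (γ n Λ, Λ)).hasFDerivAt hG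
    have heq : (fun Λ' => L (γ n Λ', Λ')) =ᶠ[nhds Λ] (fun Λ' => Λ' n) := by
      filter_upwards [hU.mem_nhds hΛ] with Λ' hΛ' using hval n Λ' hΛ'
    have h1 : fderiv ℝ (fun Λ' => L (γ n Λ', Λ')) Λ = ContinuousLinearMap.proj n := by
      rw [heq.fderiv_eq]
      exact (ContinuousLinearMap.proj n : (Fin K → ℝ) →L[ℝ] ℝ).fderiv
    have h2 := hg.fderiv
    rw [show ((fun Λ' => (γ n Λ', Λ')) : (Fin K → ℝ) → ℝ × (Fin K → ℝ)) = (fun Λ' => (γ n Λ', Λ')) from rfl] at h2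
    rw [Function.comp_def] at h2
    rw [h1] at h2
    have h4 : (1 : ℝ) = fderiv ℝ L (c, Λ)
        (fderiv ℝ (γ n) Λ (Pi.single n 1), Pi.single n 1) := by
      have := congrArg (fun T : (Fin K → ℝ) →L[ℝ] ℝ => T (Pi.single n 1)) h2
      simpa using this
    have hsplit : ((fderiv ℝ (γ n) Λ (Pi.single n 1) : ℝ), (Pi.single n 1 : Fin K → ℝ))
        = (fderiv ℝ (γ n) Λ (Pi.single n 1)) • ((1 : ℝ), (0 : Fin K → ℝ))
          + ((0 : ℝ), (Pi.single n 1 : Fin K → ℝ)) := by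
      simp [Prod.ext_iff]
    rw [hsplit, map_add, map_smul] at h4
    have h5 : deriv f c = fderiv ℝ L (c, Λ) (1, 0) := (hfd c).deriv
    have h6 : deriv f c = 0 := hcrit n Λ hΛ
    rw [← h5, h6] at h4
    simpa [F] using h4.symm
  -- LHS tends to F c = 1 along the punctured neighborhood
  have hLHS : Filter.Tendsto F (nhdsWithin c {c}ᶜ) (nhds 1) := by
    rw [← hFc1]
    exact (hFc.tendsto c).mono_left nhdsWithin_le_nhds
  -- deriv f has derivative S at c
  have hdf : HasDerivAt (deriv f) S c := by
    have hfC' : ContDiff ℝ (⊤ : ℕ∞) f := hfC.of_le (by simp)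
    have : ContDiff ℝ ((⊤ : ℕ∞) : WithTop ℕ∞) (deriv f) := (contDiff_infty_iff_deriv.mp hfC').2
    exact (this.differentiable (by simp) c).hasDerivAt
  have hslope : Filter.Tendsto (slope (deriv f) c) (nhdsWithin c {c}ᶜ) (nhds S) :=
    hasDerivAt_iff_tendsto_slope.mp hdf
  -- RHS tends to α n Λ * c * S
  have hRHS : Filter.Tendsto (fun p => α n Λ * p / (p - c) * deriv f p)
      (nhdsWithin c {c}ᶜ) (nhds (α n Λ * c * S)) := by
    have hid : Filter.Tendsto (fun p : ℝ => α n Λ * p) (nhdsWithin c {c}ᶜ)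
        (nhds (α n Λ * c)) :=
      (tendsto_const_nhds.mul ((continuous_id.tendsto c).mono_left nhdsWithin_le_nhds))
    have := hid.mul hslope
    refine this.congr' ?_
    filter_upwards [self_mem_nhdsWithin] with p hp
    have hpc : p - c ≠ 0 := sub_ne_zero.mpr (by simpa using hp)
    have h6 : deriv f c = 0 := hcrit n Λ hΛ
    rw [slope_def_field]
    field_simp [h6]
    rw [h6, sub_zero]
  -- LHS = RHS eventually
  have hEq : F =ᶠ[nhdsWithin c {c}ᶜ] (fun p => α n Λ * p / (p - c) * deriv f p) := by
    filter_upwards [hLowner n Λ hΛ] with p hp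
    rw [hF, ← hp, hFd p]
    simp
  have h1 : (1 : ℝ) = α n Λ * c * S :=
    tendsto_nhds_unique (hLHS.congr' hEq) hRHS
  have hcs : c * S ≠ 0 := mul_ne_zero (hγ0 n Λ hΛ) (hnd n Λ hΛ)
  refine eq_one_div_of_mul_eq_one_left ?_
  rw [← mul_assoc]
  exact h1.symm
end

section
/- In the chordal case, if functions γ_n, α_n satisfy the chordal Gibbons–Tsarev equations ∂γ_n/∂λ_m = α_m/(γ_m − γ_n) and ∂α_n/∂λ_m = 2α_m α_n/(γ_m − γ_n)² for m ≠ n with α_n > 0, then the rotation coefficients of h_n = √α_n satisfy (1/h_m) ∂h_n/∂λ_m = √(α_m α_n)/(γ_m − γ_n)², which is symmetric in m, n, and satisfies the Darboux equations ∂β_{mn}/∂λ_k = β_{mk} β_{kn} for distinct k, m, n. -/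
/-- The chordal rotation coefficients β_{mn} = √(α_m α_n)/(γ_m − γ_n)². -/
noncomputable def rotCoeffChordal {K : ℕ} (γ α : Fin K → (Fin K → ℝ) → ℝ)
    (m n : Fin K) (Λ : Fin K → ℝ) : ℝ :=
  Real.sqrt (α m Λ * α n Λ) / (γ m Λ - γ n Λ) ^ 2

lemma pd_mul {K : ℕ} {f g : (Fin K → ℝ) → ℝ} {m : Fin K} {Λ : Fin K → ℝ}
    (hf : DifferentiableAt ℝ f Λ) (hg : DifferentiableAt ℝ g Λ) :
    pd (fun x => f x * g x) m Λ = f Λ * pd g m Λ + g Λ * pd f m Λ := by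
  unfold pd; rw [fderiv_fun_mul hf hg]; simp

lemma pd_sub {K : ℕ} {f g : (Fin K → ℝ) → ℝ} {m : Fin K} {Λ : Fin K → ℝ}
    (hf : DifferentiableAt ℝ f Λ) (hg : DifferentiableAt ℝ g Λ) :
    pd (fun x => f x - g x) m Λ = pd f m Λ - pd g m Λ := by
  unfold pd; rw [fderiv_fun_sub hf hg]; simp

lemma pd_sq {K : ℕ} {f : (Fin K → ℝ) → ℝ} {m : Fin K} {Λ : Fin K → ℝ}
    (hf : DifferentiableAt ℝ f Λ) :
    pd (fun x => (f x) ^ 2) m Λ = 2 * f Λ * pd f m Λ := by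
  have h : (fun x => (f x) ^ 2) = fun x => f x * f x := by ext x; ring
  rw [h, pd_mul hf hf]; ring

lemma pd_sqrt {K : ℕ} {f : (Fin K → ℝ) → ℝ} {m : Fin K} {Λ : Fin K → ℝ}
    (hf : DifferentiableAt ℝ f Λ) (h0 : f Λ ≠ 0) :
    pd (fun x => Real.sqrt (f x)) m Λ = pd f m Λ / (2 * Real.sqrt (f Λ)) := by
  have h : HasFDerivAt (fun x => Real.sqrt (f x))
      ((1 / (2 * Real.sqrt (f Λ))) • fderiv ℝ f Λ) Λ :=
    (Real.hasDerivAt_sqrt h0).comp_hasFDerivAt Λ hf.hasFDerivAt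
  unfold pd; rw [h.fderiv]; simp [div_eq_mul_inv]; ring

lemma pd_inv {K : ℕ} {g : (Fin K → ℝ) → ℝ} {m : Fin K} {Λ : Fin K → ℝ}
    (hg : DifferentiableAt ℝ g Λ) (h0 : g Λ ≠ 0) :
    pd (fun x => (g x)⁻¹) m Λ = -pd g m Λ / (g Λ) ^ 2 := by
  have h : HasFDerivAt (fun x => (g x)⁻¹) ((-(g Λ ^ 2)⁻¹) • fderiv ℝ g Λ) Λ :=
    (hasDerivAt_inv h0).comp_hasFDerivAt Λ hg.hasFDerivAt
  unfold pd; rw [h.fderiv]; simp [div_eq_mul_inv]; ring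

lemma pd_div {K : ℕ} {f g : (Fin K → ℝ) → ℝ} {m : Fin K} {Λ : Fin K → ℝ}
    (hf : DifferentiableAt ℝ f Λ) (hg : DifferentiableAt ℝ g Λ) (h0 : g Λ ≠ 0) :
    pd (fun x => f x / g x) m Λ = (pd f m Λ * g Λ - f Λ * pd g m Λ) / (g Λ) ^ 2 := by
  have h : (fun x => f x / g x) = fun x => f x * (g x)⁻¹ := by
    ext x; rw [div_eq_mul_inv]
  rw [h, pd_mul (g := fun x => (g x)⁻¹) hf (hg.inv h0), pd_inv hg h0]
  field_simp; ring

/-- Under the chordal Gibbons–Tsarev equations with α_n > 0, the rotation coefficients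
of h_n = √α_n equal √(α_m α_n)/(γ_m − γ_n)², are symmetric in m, n, and satisfy the
Darboux equations ∂β_{mn}/∂λ_k = β_{mk} β_{kn} for pairwise distinct k, m, n. -/
theorem chordal_GT_rotation_Darboux {K : ℕ} (γ α : Fin K → (Fin K → ℝ) → ℝ)
    (hγs : ∀ n, ContDiff ℝ (⊤ : ℕ∞) (γ n)) (hαs : ∀ n, ContDiff ℝ (⊤ : ℕ∞) (α n))
    (hsep : ∀ m n, m ≠ n → ∀ Λ, γ m Λ ≠ γ n Λ)
    (hpos : ∀ n Λ, 0 < α n Λ)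
    (hGT1 : ∀ m n, m ≠ n → ∀ Λ,
      pd (γ n) m Λ = α m Λ / (γ m Λ - γ n Λ))
    (hGT2 : ∀ m n, m ≠ n → ∀ Λ,
      pd (α n) m Λ = 2 * α m Λ * α n Λ / (γ m Λ - γ n Λ) ^ 2) :
    (∀ m n, m ≠ n → ∀ Λ,
      (1 / Real.sqrt (α m Λ)) * pd (fun Λ' => Real.sqrt (α n Λ')) m Λ
        = rotCoeffChordal γ α m n Λ)
    ∧ (∀ m n, m ≠ n → ∀ Λ,
      rotCoeffChordal γ α m n Λ = rotCoeffChordal γ α n m Λ)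
    ∧ (∀ k m n, k ≠ m → k ≠ n → m ≠ n → ∀ Λ,
      pd (rotCoeffChordal γ α m n) k Λ
        = rotCoeffChordal γ α m k Λ * rotCoeffChordal γ α k n Λ) := by
  have hγd : ∀ n (Λ : Fin K → ℝ), DifferentiableAt ℝ (γ n) Λ :=
    fun n Λ => ((hγs n).differentiable (by simp)).differentiableAt
  have hαd : ∀ n (Λ : Fin K → ℝ), DifferentiableAt ℝ (α n) Λ :=
    fun n Λ => ((hαs n).differentiable (by simp)).differentiableAt
  refine ⟨?_, ?_, ?_⟩
  · -- Part 1
    intro m n hmn Λ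
    have hd : (γ m Λ - γ n Λ) ≠ 0 := sub_ne_zero.mpr (hsep m n hmn Λ)
    have ham := hpos m Λ
    have han := hpos n Λ
    rw [pd_sqrt (hαd n Λ) han.ne', hGT2 m n hmn Λ]
    unfold rotCoeffChordal
    rw [Real.sqrt_mul ham.le]
    have h1 : Real.sqrt (α m Λ) ^ 2 = α m Λ := Real.sq_sqrt ham.le
    have h2 : Real.sqrt (α n Λ) ^ 2 = α n Λ := Real.sq_sqrt han.le
    have hm0 : Real.sqrt (α m Λ) ≠ 0 := (Real.sqrt_pos.mpr ham).ne'
    have hn0 : Real.sqrt (α n Λ) ≠ 0 := (Real.sqrt_pos.mpr han).ne'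
    set sm := Real.sqrt (α m Λ)
    set sn := Real.sqrt (α n Λ)
    rw [← h1, ← h2]
    field_simp
  · -- Part 2 : symmetry
    intro m n hmn Λ
    unfold rotCoeffChordal
    rw [mul_comm, show (γ m Λ - γ n Λ) ^ 2 = (γ n Λ - γ m Λ) ^ 2 by ring]
  · -- Part 3 : Darboux
    intro k m n hkm hkn hmn Λ
    have hdkm : (γ k Λ - γ m Λ) ≠ 0 := sub_ne_zero.mpr (hsep k m hkm Λ)
    have hdkn : (γ k Λ - γ n Λ) ≠ 0 := sub_ne_zero.mpr (hsep k n hkn Λ)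
    have hdmn : (γ m Λ - γ n Λ) ≠ 0 := sub_ne_zero.mpr (hsep m n hmn Λ)
    have hdmk : (γ m Λ - γ k Λ) ≠ 0 := sub_ne_zero.mpr (hsep m k (Ne.symm hkm) Λ)
    have ham := hpos m Λ
    have han := hpos n Λ
    have hak := hpos k Λ
    have hprod : 0 < α m Λ * α n Λ := mul_pos ham han
    -- differentiability
    have hmuld : DifferentiableAt ℝ (fun x => α m x * α n x) Λ :=
      (hαd m Λ).mul (hαd n Λ)
    have hNd : DifferentiableAt ℝ (fun x => Real.sqrt (α m x * α n x)) Λ :=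
      ((Real.hasDerivAt_sqrt hprod.ne').comp_hasFDerivAt Λ hmuld.hasFDerivAt).differentiableAt
    have hsubd : DifferentiableAt ℝ (fun x => γ m x - γ n x) Λ :=
      (hγd m Λ).sub (hγd n Λ)
    have hDd : DifferentiableAt ℝ (fun x => (γ m x - γ n x) ^ 2) Λ := hsubd.pow 2
    have hD0 : (γ m Λ - γ n Λ) ^ 2 ≠ 0 := pow_ne_zero 2 hdmn
    have hrot : rotCoeffChordal γ α m n
        = fun Λ' => Real.sqrt (α m Λ' * α n Λ') / (γ m Λ' - γ n Λ') ^ 2 := rfl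
    rw [hrot, pd_div hNd hDd hD0, pd_sqrt hmuld hprod.ne',
      pd_mul (hαd m Λ) (hαd n Λ), pd_sq hsubd, pd_sub (hγd m Λ) (hγd n Λ),
      hGT1 k m hkm Λ, hGT1 k n hkn Λ, hGT2 k m hkm Λ, hGT2 k n hkn Λ]
    unfold rotCoeffChordal
    have hsqr : Real.sqrt (α m Λ * α k Λ) * Real.sqrt (α k Λ * α n Λ)
        = α k Λ * Real.sqrt (α m Λ * α n Λ) := by
      rw [← Real.sqrt_mul (by positivity),
        show α m Λ * α k Λ * (α k Λ * α n Λ) = α k Λ ^ 2 * (α m Λ * α n Λ) by ring,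
        Real.sqrt_mul (by positivity), Real.sqrt_sq hak.le]
    rw [div_mul_div_comm, hsqr]
    set s := Real.sqrt (α m Λ * α n Λ) with hs_def
    have hs : s ^ 2 = α m Λ * α n Λ := Real.sq_sqrt hprod.le
    have hs0 : (0:ℝ) < s := Real.sqrt_pos.mpr hprod
    have han' : α n Λ = s ^ 2 / α m Λ := by
      rw [eq_div_iff ham.ne', hs]; ring
    rw [han']
    field_simp
    ring
end

section
/- Let λ(p) = p^{−N} ∏_{i=1}^M (p − b_i)^{κ_i} with M̃ = Σκ_i − N, and define the radial metric (∂/∂b_i, ∂/∂b_j) = Σ_n Res_{p=γ_n} [ (∂ log λ/∂b_i)(∂ log λ/∂b_j)(d log λ/d log p)^{−1} (d log p) ], where γ_n are the M distinct critical points of λ. Then (∂/∂b_i, ∂/∂b_j) = (1 − δ_{ij}) κ_i κ_j/(N b_i b_j) + δ_{ij} (κ_i − N)κ_i/(N b_i²). -/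
/-!
The metric is a sum of residues at the critical points `γ n` of a rational 1-form. Writing
`B = ∏ (p - b k)` and `Q = Mt · ∏ (p - γ n)`, the form is `A / (p B Q) dp` with
`A = κ i κ j ∏_{k ≠ i} (p - b k) ∏_{k ≠ j} (p - b k)`, whose poles `0`, `b k`, `γ n` are all simple
and whose residue at `∞` vanishes because `deg A ≤ deg (p B Q) - 2`. The residue theorem for such
a form is the Lagrange interpolation formula for the top coefficient of `A`, so the residues at
the `γ n` are minus those at `0` and at the `b k`. These are read off from the factorization
`Q = -N B + Σ κ k p ∏_{l ≠ k} (p - b l)` of the logarithmic derivative of `λ`, evaluated at `0`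
and at `b k`: the residue at `0` is `-κ i κ j / (N b i b j)`, and among the `b k` only `b i`
contributes, when `i = j`, namely `κ i / b i ^ 2`.
-/

open Polynomial Finset Lagrange

section Residues

variable {F : Type*} [Field F] {M : ℕ} (b γ : Fin M → F)

def poles : Option (Fin M ⊕ Fin M) → F := fun o => o.elim 0 (Sum.elim b γ)

variable {b γ}

theorem poles_injective (hb : Function.Injective b) (hγ : Function.Injective γ)
    (hb0 : ∀ k, b k ≠ 0) (hγ0 : ∀ n, γ n ≠ 0) (hγb : ∀ n k, γ n ≠ b k) :
    Function.Injective (poles b γ) := by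
  rintro (_ | k | n) (_ | l | m) h <;> simp_all [poles, hb.eq_iff, hγ.eq_iff, eq_comm]

theorem nodal_poles : nodal univ (poles b γ) = X * (nodal univ b * nodal univ γ) := by
  simp [nodal, poles, Fintype.prod_option, Fintype.prod_sum_type]

theorem sum_residues_eq_zero (hinj : Function.Injective (poles b γ)) {A : F[X]}
    (hA : A.natDegree < M + M) :
    A.eval 0 / ((nodal univ b).eval 0 * (nodal univ γ).eval 0)
      + ∑ k, A.eval (b k) / (b k * (nodal univ b).derivative.eval (b k) * (nodal univ γ).eval (b k))
      + ∑ n, A.eval (γ n) / (γ n * (nodal univ b).eval (γ n) * (nodal univ γ).derivative.eval (γ n))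
      = 0 := by
  have hcard : #(univ : Finset (Option (Fin M ⊕ Fin M))) = M + M + 1 := by simp
  have hdeg : A.degree < #(univ : Finset (Option (Fin M ⊕ Fin M))) := by
    rw [hcard]
    exact degree_le_natDegree.trans_lt (by exact_mod_cast hA.trans (by omega))
  have h := coeff_eq_sum hinj.injOn hdeg
  rw [hcard, Nat.add_sub_cancel, coeff_eq_zero_of_natDegree_lt hA] at h
  simp_rw [← eval_nodal, ← eval_nodal_derivative_eval_node_eq (mem_univ _), nodal_poles] at h
  simp only [poles, derivative_mul, derivative_X, one_mul, eval_add, eval_mul, eval_X,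
    Fintype.sum_option, Option.elim_none, zero_mul, add_zero, Option.elim_some,
    Fintype.sum_sum_type, Sum.elim_inl, Sum.elim_inr, mem_univ, eval_nodal_at_node, zero_add,
    mul_zero] at h
  simpa only [mul_assoc, add_assoc] using h.symm

end Residues

section LogDerivative

variable {F : Type*} [Field F] {M : ℕ} {b κ γ : Fin M → F} {N Mt : F}

theorem C_mul_nodal_eq_of_logDeriv [Infinite F]
    (hlog : ∀ p : F, p ≠ 0 → (∀ i, p ≠ b i) →
      -N / p + ∑ i, κ i / (p - b i) = Mt * (∏ n, (p - γ n)) / (p * ∏ i, (p - b i))) :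
    C Mt * nodal univ γ = -C N * nodal univ b + ∑ k, C (κ k) * X * nodal (univ.erase k) b := by
  refine eq_of_infinite_eval_eq _ _
    (Set.Infinite.mono ?_ ((Set.finite_range b).insert 0).infinite_compl)
  intro p hp
  simp only [Set.mem_compl_iff, Set.mem_insert_iff, Set.mem_range, not_or, not_exists] at hp
  obtain ⟨hp0, hpb⟩ := hp
  have hpb' : ∀ i, p - b i ≠ 0 := fun i => sub_ne_zero.mpr fun h => hpb i h.symm
  have hB : ∏ i, (p - b i) ≠ 0 := prod_ne_zero_iff.mpr fun i _ => hpb' i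
  have h := hlog p hp0 fun i h => hpb i h.symm
  rw [eq_div_iff (mul_ne_zero hp0 hB)] at h
  simp only [Set.mem_ofPred_eq, eval_mul, eval_C, eval_nodal, eval_add, eval_neg, eval_finsetSum,
    eval_X]
  rw [← h, add_mul, sum_mul]
  congr 1
  · field_simp
  · refine sum_congr rfl fun k _ => ?_
    rw [← mul_prod_erase _ _ (mem_univ k)]
    field_simp [hpb' k]

theorem mul_eval_zero_nodal_of_C_mul_nodal_eq
    (hQ : C Mt * nodal univ γ = -C N * nodal univ b + ∑ k, C (κ k) * X * nodal (univ.erase k) b) :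
    Mt * (nodal univ γ).eval 0 = -N * (nodal univ b).eval 0 := by
  simpa [eval_finsetSum] using congrArg (eval 0) hQ

theorem mul_eval_nodal_of_C_mul_nodal_eq
    (hQ : C Mt * nodal univ γ = -C N * nodal univ b + ∑ k, C (κ k) * X * nodal (univ.erase k) b)
    (k : Fin M) :
    Mt * (nodal univ γ).eval (b k) = κ k * b k * (nodal (univ.erase k) b).eval (b k) := by
  have h := congrArg (eval (b k)) hQ
  simp only [eval_mul, eval_C, eval_add, eval_neg, eval_finsetSum, eval_X,
    eval_nodal_at_node (mem_univ k), mul_zero, zero_add] at h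
  rw [h, sum_eq_single k]
  · intro l _ hlk
    rw [eval_nodal_at_node (mem_erase.mpr ⟨Ne.symm hlk, mem_univ k⟩), mul_zero]
  · simp

end LogDerivative

section RadialMetric

variable {F : Type*} [Field F] {M : ℕ} (κ b : Fin M → F)

noncomputable def residueNumerator (i j : Fin M) : F[X] :=
  C (κ i * κ j) * nodal (univ.erase i) b * nodal (univ.erase j) b

theorem natDegree_residueNumerator_lt (i j : Fin M) :
    (residueNumerator κ b i j).natDegree < M + M := by
  have hM : 0 < M := i.pos
  calc (residueNumerator κ b i j).natDegree
      ≤ (nodal (univ.erase i) b).natDegree + (nodal (univ.erase j) b).natDegree :=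
        natDegree_mul_le.trans (add_le_add_left (natDegree_C_mul_le _ _) _)
    _ < M + M := by
        simp only [natDegree_nodal, card_erase_of_mem (mem_univ _), card_univ, Fintype.card_fin]
        omega

variable {κ b}

theorem residueNumerator_eval_zero_div {N Mt Γ0 : F} (hb0 : ∀ k, b k ≠ 0) (hN : N ≠ 0)
    (h0 : Mt * Γ0 = -N * (nodal univ b).eval 0) (i j : Fin M) :
    (residueNumerator κ b i j).eval 0 / ((nodal univ b).eval 0 * Γ0)
      = -(Mt * κ i * κ j / (N * b i * b j)) := by
  have hB0 : (nodal univ b).eval 0 ≠ 0 := eval_nodal_not_at_node fun k _ => (hb0 k).symm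
  have hΓ0 : Γ0 ≠ 0 := by
    rintro rfl
    exact mul_ne_zero (neg_ne_zero.mpr hN) hB0 (by simpa using h0.symm)
  have hi := congrArg (eval 0) (nodal_eq_mul_nodal_erase (v := b) (mem_univ i))
  have hj := congrArg (eval 0) (nodal_eq_mul_nodal_erase (v := b) (mem_univ j))
  simp only [eval_mul, eval_sub, eval_X, eval_C, zero_sub] at hi hj
  rw [residueNumerator, eval_mul, eval_mul, eval_C]
  field_simp [hb0 i, hb0 j]
  linear_combination κ i * κ j * ((nodal univ b).eval 0 * h0
    - N * ((nodal univ b).eval 0 * hi - b i * (nodal (univ.erase i) b).eval 0 * hj))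

theorem sum_residueNumerator_eval_node_div {Mt : F} {Γ : F[X]} (hb : Function.Injective b)
    (hb0 : ∀ k, b k ≠ 0) (hΓ : ∀ k, Γ.eval (b k) ≠ 0)
    (hbk : ∀ k, Mt * Γ.eval (b k) = κ k * b k * (nodal (univ.erase k) b).eval (b k))
    (i j : Fin M) :
    ∑ k, (residueNumerator κ b i j).eval (b k)
        / (b k * (nodal univ b).derivative.eval (b k) * Γ.eval (b k))
      = if i = j then Mt * κ i / b i ^ 2 else 0 := by
  rw [sum_eq_single i]
  · split_ifs with hij
    · subst hij
      have hBi : (nodal (univ.erase i) b).eval (b i) ≠ 0 :=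
        eval_nodal_not_at_node fun k hk => hb.ne (mem_erase.mp hk).1.symm
      rw [residueNumerator, eval_mul, eval_mul, eval_C,
        eval_nodal_derivative_eval_node_eq (mem_univ i)]
      field_simp [hb0 i, hΓ i]
      linear_combination -κ i * hbk i
    · rw [residueNumerator, eval_mul, eval_nodal_at_node (mem_erase.mpr ⟨hij, mem_univ i⟩),
        mul_zero, zero_div]
  · intro k _ hki
    rw [residueNumerator, eval_mul, eval_mul,
      eval_nodal_at_node (mem_erase.mpr ⟨hki, mem_univ k⟩), mul_zero, zero_mul, zero_div]
  · simp

theorem residueNumerator_eval_div {Mt : F} (hMt : Mt ≠ 0) {x : F} (hx : ∀ k, x ≠ b k) (d : F)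
    (i j : Fin M) :
    (residueNumerator κ b i j).eval x / (x * (nodal univ b).eval x * d)
      = Mt * (κ i * κ j * (∏ k, (x - b k)) / ((x - b i) * (x - b j) * x * (Mt * d))) := by
  have hxb : ∀ k, x - b k ≠ 0 := fun k => sub_ne_zero.mpr (hx k)
  have hi := congrArg (eval x) (nodal_eq_mul_nodal_erase (v := b) (mem_univ i))
  have hj := congrArg (eval x) (nodal_eq_mul_nodal_erase (v := b) (mem_univ j))
  simp only [eval_mul, eval_sub, eval_X, eval_C] at hi hj
  rw [residueNumerator, eval_mul, eval_mul, eval_C, ← eval_nodal]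
  field_simp [hxb i, hxb j, eval_nodal_not_at_node fun k _ => hx k]
  linear_combination -κ i * κ j * x⁻¹ * d⁻¹ *
    ((nodal univ b).eval x * hi + (x - b i) * (nodal (univ.erase i) b).eval x * hj)

end RadialMetric

theorem deriv_const_mul_prod_sub {𝕜 ι : Type*} [NontriviallyNormedField 𝕜] (s : Finset ι)
    (v : ι → 𝕜) (c x : 𝕜) :
    deriv (fun p => c * ∏ i ∈ s, (p - v i)) x = c * (nodal s v).derivative.eval x := by
  have h : (fun p => c * ∏ i ∈ s, (p - v i)) = fun p => (C c * nodal s v).eval p := by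
    ext p
    simp [eval_nodal]
  rw [h, Polynomial.deriv, derivative_C_mul, eval_mul, eval_C]

theorem radial_metric_caseI_general (M : ℕ) (b κ : Fin M → ℂ) (N : ℤ) (γ : Fin M → ℂ)
    (hb : Function.Injective b) (hb0 : ∀ i, b i ≠ 0)
    (hN : N ≠ 0)
    (hγinj : Function.Injective γ) (hγ0 : ∀ n, γ n ≠ 0) (hγb : ∀ n i, γ n ≠ b i)
    (Mt : ℂ) (hMt0 : Mt ≠ 0)
    (hlog : ∀ p : ℂ, p ≠ 0 → (∀ i, p ≠ b i) →
      -(N : ℂ) / p + ∑ i, κ i / (p - b i)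
        = Mt * (∏ n, (p - γ n)) / (p * ∏ i, (p - b i)))
    (i j : Fin M) :
    ∑ n, κ i * κ j * (∏ k, (γ n - b k)) /
        ((γ n - b i) * (γ n - b j) * γ n
          * deriv (fun p => Mt * ∏ n', (p - γ n')) (γ n))
      = (if i = j then 0 else 1) * κ i * κ j / ((N : ℂ) * b i * b j)
        + (if i = j then 1 else 0) * (κ i - (N : ℂ)) * κ i / ((N : ℂ) * b i ^ 2) := by
  have hNc : (N : ℂ) ≠ 0 := Int.cast_ne_zero.mpr hN
  have hQ := C_mul_nodal_eq_of_logDeriv hlog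
  have hres := sum_residues_eq_zero (poles_injective hb hγinj hb0 hγ0 hγb)
    (natDegree_residueNumerator_lt κ b i j)
  rw [residueNumerator_eval_zero_div hb0 hNc (mul_eval_zero_nodal_of_C_mul_nodal_eq hQ),
    sum_residueNumerator_eval_node_div hb hb0
      (fun k => eval_nodal_not_at_node fun n _ => (hγb n k).symm)
      (mul_eval_nodal_of_C_mul_nodal_eq hQ),
    sum_congr rfl fun n _ => residueNumerator_eval_div hMt0 (hγb n) _ i j, ← mul_sum] at hres
  simp_rw [deriv_const_mul_prod_sub]
  rw [← mul_right_inj' hMt0, eq_neg_of_add_eq_zero_right hres]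
  rcases eq_or_ne i j with rfl | hij
  · simp only [if_true]
    field_simp [hb0 i]
    ring
  · simp only [if_neg hij]
    field_simp [hb0 i, hb0 j]
    ring

/-- For λ(p) = p^{−N} ∏ (p − b_i)^{κ_i} with critical points γ_1,…,γ_M (the roots of Q,
where d log λ/dp = Q(p)/(p ∏ (p − b_i)), Q(p) = M̃ ∏ (p − γ_n)), the radial metric
(∂/∂b_i, ∂/∂b_j) = Σ_n Res_{p=γ_n}[(∂logλ/∂b_i)(∂logλ/∂b_j)(dlogλ/dlogp)⁻¹ dlogp]
— each residue at the simple pole γ_n being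
κ_i κ_j ∏_k(γ_n − b_k)/((γ_n − b_i)(γ_n − b_j) γ_n Q'(γ_n)) —
equals (1 − δ_{ij}) κ_i κ_j/(N b_i b_j) + δ_{ij} (κ_i − N) κ_i/(N b_i²). -/
theorem radial_metric_caseI (M : ℕ) (b κ : Fin M → ℂ) (N : ℤ) (γ : Fin M → ℂ)
    (hb : Function.Injective b) (hb0 : ∀ i, b i ≠ 0)
    (hκ : ∀ i, κ i ≠ 0) (hN : N ≠ 0)
    (hγinj : Function.Injective γ) (hγ0 : ∀ n, γ n ≠ 0) (hγb : ∀ n i, γ n ≠ b i)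
    (Mt : ℂ) (hMt : Mt = (∑ i, κ i) - (N : ℂ)) (hMt0 : Mt ≠ 0)
    (hlog : ∀ p : ℂ, p ≠ 0 → (∀ i, p ≠ b i) →
      -(N : ℂ) / p + ∑ i, κ i / (p - b i)
        = Mt * (∏ n, (p - γ n)) / (p * ∏ i, (p - b i)))
    (i j : Fin M) :
    ∑ n, κ i * κ j * (∏ k, (γ n - b k)) /
        ((γ n - b i) * (γ n - b j) * γ n
          * deriv (fun p => Mt * ∏ n', (p - γ n')) (γ n))
      = (if i = j then 0 else 1) * κ i * κ j / ((N : ℂ) * b i * b j)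
        + (if i = j then 1 else 0) * (κ i - (N : ℂ)) * κ i / ((N : ℂ) * b i ^ 2) :=
  radial_metric_caseI_general M b κ N γ hb hb0 hN hγinj hγ0 hγb Mt hMt0 hlog i j
end
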